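/- For the generating function I(z) = (1 − √(1−8z))/4 and Ĩ(z) = z²/(1 − 4(z + I(z)²))^{3/2}, one has lim_{z→1/8⁻} Ĩ′(z)/I′(z) = 3/2, and consequently the coefficient ratio [zⁿ]Ĩ(z)/[zⁿ]I(z) → 3/2 as n → ∞. -/

import Mathlib

/-!
Substituting `z = (1 - s²)/8` with `s = √(1 - 8z) ≥ 0` gives `I = (1 - s)/4` and
`Ĩ = (1 - s)²/(8(1 + s))`; since `ds/dz = -4/s` cancels in the quotient,
`Ĩ'/I' = (1 - s)(3 + s)/(2(1 + s)²)`, which tends to `3/2` as `s → 0`.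

For the coefficients, `I = z + 2I²` is the Catalan recurrence, so `[z^{n+1}] I = 2ⁿ Cₙ`, and
`I = z (4Ĩ + 1 + 2I)` gives `4 [zⁿ] Ĩ = [z^{n+1}] I - 2 [zⁿ] I` for `n ≥ 1`. With
`(n + 2) C_{n+1} = 2(2n + 1) Cₙ` the coefficient ratio is exactly `3/2 - 3/(n + 1)`.
-/

open Filter

noncomputable def Ifun (z : ℝ) : ℝ := (1 - Real.sqrt (1 - 8 * z)) / 4

/-- Enumerates tree-structures with two marked distinct leaves connected to the root through
∨-nodes only. -/
noncomputable def Itilde (z : ℝ) : ℝ :=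
  z ^ 2 / (1 - 4 * (z + Ifun z ^ 2)) ^ ((3 : ℝ) / 2)

open Finset FormalMultilinearSeries Topology

def HasCoeffs (f : ℝ → ℝ) (a : ℕ → ℝ) (r : ℝ) : Prop :=
  ∀ z : ℝ, |z| < r → HasSum (fun n => a n * z ^ n) (f z)

namespace HasCoeffs

variable {f g : ℝ → ℝ} {a b : ℕ → ℝ} {r : ℝ}

lemma le_radius (h : HasCoeffs f a r) : ENNReal.ofReal r ≤ (ofScalars ℝ a).radius := by
  refine ENNReal.le_of_forall_nnreal_lt fun ρ hρ => le_radius_of_tendsto _ (l := 0) ?_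
  have hρr : |(ρ : ℝ)| < r := by simpa using hρ
  simpa [ofScalars_norm, abs_mul] using (h ρ hρr).summable.tendsto_atTop_zero.abs

lemma summable_norm (h : HasCoeffs f a r) {z : ℝ} (hz : |z| < r) :
    Summable fun n => ‖a n * z ^ n‖ := by
  have hzr : (‖z‖₊ : ENNReal) < (ofScalars ℝ a).radius :=
    lt_of_lt_of_le (by simpa using hz) h.le_radius
  simpa [ofScalars_norm, norm_mul] using (ofScalars ℝ a).summable_norm_mul_pow hzr

lemma hasFPowerSeriesAt (h : HasCoeffs f a r) (hr : 0 < r) :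
    HasFPowerSeriesAt f (ofScalars ℝ a) 0 :=
  ⟨ENNReal.ofReal r, h.le_radius, by simpa using hr, fun {y} hy => by
    simpa [ofScalars_apply_eq, mul_comm] using h y (by simpa using hy)⟩

lemma coeff_zero (h : HasCoeffs f a r) (hr : 0 < r) : a 0 = f 0 := by
  have h0 : HasSum (fun n => a n * 0 ^ n) (a 0) := by
    simpa using hasSum_single (f := fun n => a n * (0 : ℝ) ^ n) 0 fun n hn => by simp [hn]
  exact h0.unique (h 0 (by simpa using hr))

lemma eq_of_eqOn (hf : HasCoeffs f a r) (hg : HasCoeffs g b r) (hr : 0 < r)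
    (hfg : ∀ z, |z| < r → f z = g z) : a = b := by
  have hg' : HasCoeffs f b r := fun z hz => hfg z hz ▸ hg z hz
  exact ofScalars_series_injective ℝ ℝ
    ((hf.hasFPowerSeriesAt hr).eq_formalMultilinearSeries (hg'.hasFPowerSeriesAt hr))

lemma add (hf : HasCoeffs f a r) (hg : HasCoeffs g b r) :
    HasCoeffs (fun z => f z + g z) (fun n => a n + b n) r := fun z hz => by
  simpa [add_mul] using (hf z hz).add (hg z hz)

lemma const_mul (hf : HasCoeffs f a r) (c : ℝ) :
    HasCoeffs (fun z => c * f z) (fun n => c * a n) r := fun z hz => by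
  simpa [mul_assoc] using (hf z hz).mul_left c

lemma mul (hf : HasCoeffs f a r) (hg : HasCoeffs g b r) :
    HasCoeffs (fun z => f z * g z) (fun n => ∑ p ∈ antidiagonal n, a p.1 * b p.2) r := by
  intro z hz
  have hfs := hf.summable_norm hz
  have hgs := hg.summable_norm hz
  have hsum := (summable_norm_sum_mul_antidiagonal_of_summable_norm hfs hgs).of_norm.hasSum
  rw [← tsum_mul_tsum_eq_tsum_sum_antidiagonal_of_summable_norm hfs hgs,
    (hf z hz).tsum_eq, (hg z hz).tsum_eq] at hsum
  refine hsum.congr_fun fun n => ?_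
  rw [sum_mul]
  refine sum_congr rfl fun p hp => ?_
  rw [← mem_antidiagonal.mp hp, pow_add]
  ring

lemma id_mul (hf : HasCoeffs f a r) :
    HasCoeffs (fun z => z * f z) (fun n => if n = 0 then 0 else a (n - 1)) r := by
  intro z hz
  rw [← hasSum_nat_add_iff' 1]
  simpa [pow_succ, mul_comm, mul_left_comm] using (hf z hz).mul_left z

end HasCoeffs

lemma hasCoeffs_one (r : ℝ) : HasCoeffs (fun _ => 1) (fun n => if n = 0 then 1 else 0) r :=
  fun z _ => by
    convert hasSum_ite_eq 0 (1 : ℝ) using 1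
    funext n
    split_ifs with hn <;> simp [hn]

lemma eq_two_pow_mul_catalan {a : ℕ → ℝ} (h0 : a 0 = 0) (h1 : a 1 = 1)
    (hrec : ∀ n, a (n + 2) = 2 * ∑ p ∈ antidiagonal (n + 2), a p.1 * a p.2) (n : ℕ) :
    a (n + 1) = 2 ^ n * catalan n := by
  induction n using Nat.strong_induction_on with
  | _ n ih =>
  rcases n with _ | n
  · simp [h1]
  · rw [hrec, Nat.sum_antidiagonal_succ, Nat.sum_antidiagonal_succ', h0, catalan_succ']
    simp only [zero_mul, mul_zero, zero_add, Nat.cast_sum, Nat.cast_mul, mul_sum]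
    refine sum_congr rfl fun p hp => ?_
    have hpn := mem_antidiagonal.mp hp
    rw [ih p.1 (by omega), ih p.2 (by omega), ← hpn]
    ring

lemma catalan_succ_mul (m : ℕ) : (m + 2) * catalan (m + 1) = 2 * (2 * m + 1) * catalan m := by
  apply Nat.eq_of_mul_eq_mul_left (show 0 < m + 1 by omega)
  calc (m + 1) * ((m + 2) * catalan (m + 1)) = (m + 1) * Nat.centralBinom (m + 1) := by
        rw [← succ_mul_catalan_eq_centralBinom]
    _ = 2 * (2 * m + 1) * Nat.centralBinom m := Nat.succ_mul_centralBinom_succ m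
    _ = (m + 1) * (2 * (2 * m + 1) * catalan m) := by
        rw [← succ_mul_catalan_eq_centralBinom]; ring

lemma catalan_pos (n : ℕ) : 0 < catalan n := by
  have h := succ_mul_catalan_eq_centralBinom n ▸ Nat.centralBinom_pos n
  exact Nat.pos_of_mul_pos_left h

section ClosedForm

variable {s z : ℝ}

lemma Ifun_param (hs : 0 ≤ s) : Ifun ((1 - s ^ 2) / 8) = (1 - s) / 4 := by
  rw [Ifun, show 1 - 8 * ((1 - s ^ 2) / 8) = s ^ 2 by ring, Real.sqrt_sq hs]

lemma Itilde_param (hs : 0 ≤ s) :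
    Itilde ((1 - s ^ 2) / 8) = (1 - s) ^ 2 / (8 * (1 + s)) := by
  have hbase : 1 - 4 * ((1 - s ^ 2) / 8 + ((1 - s) / 4) ^ 2) = ((1 + s) / 2) ^ 2 := by ring
  have hpow : (((1 + s) / 2) ^ 2) ^ ((3 : ℝ) / 2) = ((1 + s) / 2) ^ 3 := by
    rw [← Real.rpow_natCast _ 2, ← Real.rpow_mul (by positivity)]
    norm_num
  rw [Itilde, Ifun_param hs, hbase, hpow]
  field_simp
  ring

lemma exists_eq_one_sub_sq_div_eight (hz : z ≤ 1 / 8) : ∃ s, 0 ≤ s ∧ z = (1 - s ^ 2) / 8 :=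
  ⟨√(1 - 8 * z), Real.sqrt_nonneg _, by rw [Real.sq_sqrt (by linarith)]; ring⟩

lemma Ifun_eq_add_two_mul_sq (hz : z ≤ 1 / 8) : Ifun z = z + 2 * Ifun z ^ 2 := by
  obtain ⟨s, hs, rfl⟩ := exists_eq_one_sub_sq_div_eight hz
  rw [Ifun_param hs]
  ring

lemma Ifun_eq_mul_Itilde (hz : z ≤ 1 / 8) : Ifun z = z * (4 * Itilde z + 1 + 2 * Ifun z) := by
  obtain ⟨s, hs, rfl⟩ := exists_eq_one_sub_sq_div_eight hz
  rw [Ifun_param hs, Itilde_param hs]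
  field_simp
  ring

lemma Itilde_eq (hz : z ≤ 1 / 8) :
    Itilde z = (1 - √(1 - 8 * z)) ^ 2 / (8 * (1 + √(1 - 8 * z))) := by
  have h := Itilde_param (Real.sqrt_nonneg (1 - 8 * z))
  rwa [Real.sq_sqrt (by linarith), show (1 - (1 - 8 * z)) / 8 = z by ring] at h

end ClosedForm

section Derivatives

variable {z : ℝ}

lemma hasDerivAt_sqrt_one_sub_eight_mul (hz : z < 1 / 8) :
    HasDerivAt (fun w => √(1 - 8 * w)) (-4 / √(1 - 8 * z)) z := by
  have hpos : 0 < 1 - 8 * z := by linarith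
  refine ((Real.hasDerivAt_sqrt hpos.ne').comp z
    (((hasDerivAt_id z).const_mul 8).const_sub 1)).congr_deriv ?_
  field_simp
  ring

lemma hasDerivAt_Ifun (hz : z < 1 / 8) : HasDerivAt Ifun (1 / √(1 - 8 * z)) z := by
  have hs : 0 < √(1 - 8 * z) := Real.sqrt_pos.mpr (by linarith)
  refine (((hasDerivAt_sqrt_one_sub_eight_mul hz).const_sub 1).div_const 4).congr_deriv ?_
  field_simp

lemma hasDerivAt_Itilde (hz : z < 1 / 8) :
    HasDerivAt Itilde
      ((1 - √(1 - 8 * z)) * (3 + √(1 - 8 * z)) /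
        (2 * √(1 - 8 * z) * (1 + √(1 - 8 * z)) ^ 2)) z := by
  have hG (t : ℝ) (ht : 0 ≤ t) : HasDerivAt (fun u => (1 - u) ^ 2 / (8 * (1 + u)))
      (-((1 - t) * (3 + t)) / (8 * (1 + t) ^ 2)) t := by
    refine ((((hasDerivAt_id' t).const_sub 1).fun_pow 2).div
      (((hasDerivAt_id' t).const_add 1).const_mul 8) (by positivity)).congr_deriv ?_
    field_simp
    ring
  have hev :
      Itilde =ᶠ[𝓝 z] (fun u => (1 - u) ^ 2 / (8 * (1 + u))) ∘ fun w => √(1 - 8 * w) :=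
    eventually_of_mem (Iio_mem_nhds hz) fun w hw => Itilde_eq hw.le
  have hcomp :=
    (hG √(1 - 8 * z) (Real.sqrt_nonneg _)).comp z (hasDerivAt_sqrt_one_sub_eight_mul hz)
  refine (hcomp.congr_of_eventuallyEq hev).congr_deriv ?_
  have hs : 0 < √(1 - 8 * z) := Real.sqrt_pos.mpr (by linarith)
  generalize √(1 - 8 * z) = s at hs ⊢
  field_simp
  ring

theorem tendsto_deriv_Itilde_div_deriv_Ifun :
    Tendsto (fun z => deriv Itilde z / deriv Ifun z) (𝓝[<] (1 / 8)) (𝓝 (3 / 2)) := by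
  have hR : ContinuousAt (fun s : ℝ => (1 - s) * (3 + s) / (2 * (1 + s) ^ 2)) 0 := by
    fun_prop (disch := norm_num)
  have hS : Tendsto (fun z : ℝ => √(1 - 8 * z)) (𝓝[<] (1 / 8)) (𝓝 0) := by
    have h : Continuous fun z : ℝ => √(1 - 8 * z) := by fun_prop
    simpa using (h.tendsto (1 / 8)).mono_left nhdsWithin_le_nhds
  have hlim := hR.tendsto.comp hS
  norm_num at hlim
  refine hlim.congr' (eventually_nhdsWithin_of_forall fun z (hz : z < 1 / 8) => ?_)
  have hs : 0 < √(1 - 8 * z) := Real.sqrt_pos.mpr (by linarith)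
  dsimp only [Function.comp_apply]
  rw [(hasDerivAt_Itilde hz).deriv, (hasDerivAt_Ifun hz).deriv]
  field_simp

end Derivatives

section Coefficients

variable {a b : ℕ → ℝ} (ha : HasCoeffs Ifun a (1 / 8))
include ha

lemma coeff_Ifun (n : ℕ) : a (n + 1) = 2 ^ n * catalan n := by
  have hr : (0 : ℝ) < 1 / 8 := by norm_num
  have hrec := congrFun (ha.eq_of_eqOn
    ((hasCoeffs_one _).id_mul.add ((ha.mul ha).const_mul 2)) hr fun z hz => by
      simpa [sq] using Ifun_eq_add_two_mul_sq ((le_abs_self z).trans hz.le))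
  have h0 : a 0 = 0 := by simp [ha.coeff_zero hr, Ifun]
  refine eq_two_pow_mul_catalan h0 ?_ (fun n => by simpa using hrec (n + 2)) n
  simpa [h0, Nat.sum_antidiagonal_succ] using hrec 1

lemma coeff_Itilde (hb : HasCoeffs Itilde b (1 / 8)) (n : ℕ) :
    a (n + 2) = 4 * b (n + 1) + 2 * a (n + 1) := by
  have h := congrFun (ha.eq_of_eqOn
    (((hb.const_mul 4).add (hasCoeffs_one _)).add (ha.const_mul 2)).id_mul (by norm_num)
    fun z hz => Ifun_eq_mul_Itilde ((le_abs_self z).trans hz.le)) (n + 2)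
  simpa using h

lemma coeff_Itilde_div_coeff_Ifun (hb : HasCoeffs Itilde b (1 / 8)) (m : ℕ) :
    b (m + 1) / a (m + 1) = 3 / 2 - 3 / (m + 2) := by
  have hb' : b (m + 1) = (a (m + 2) - 2 * a (m + 1)) / 4 := by
    rw [coeff_Itilde ha hb]; ring
  have hcat : ((m : ℝ) + 2) * catalan (m + 1) = 2 * (2 * m + 1) * catalan m := by
    exact_mod_cast catalan_succ_mul m
  have hpos : (0 : ℝ) < catalan m := by exact_mod_cast catalan_pos m
  rw [hb', coeff_Ifun ha, coeff_Ifun ha]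
  field_simp
  linear_combination (2 : ℝ) ^ m * 4 * hcat

theorem tendsto_coeff_Itilde_div_coeff_Ifun (hb : HasCoeffs Itilde b (1 / 8)) :
    Tendsto (fun n => b n / a n) atTop (𝓝 (3 / 2)) := by
  rw [← tendsto_add_atTop_iff_nat 1]
  have h := (tendsto_add_atTop_iff_nat 2).mpr (tendsto_const_div_atTop_nhds_zero_nat (3 : ℝ))
  simpa [coeff_Itilde_div_coeff_Ifun ha hb] using h.const_sub (3 / 2 : ℝ)

end Coefficients

/-- One has `lim_{z→1/8⁻} Ĩ′(z)/I′(z) = 3/2`, and consequently the ratio of the `n`-th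
power series coefficients of `Ĩ` and `I` tends to `3/2` as `n → ∞`. -/
theorem stmt18 :
    Tendsto (fun z => deriv Itilde z / deriv Ifun z)
      (nhdsWithin (1 / 8 : ℝ) (Set.Iio (1 / 8))) (nhds (3 / 2)) ∧
    ∀ a b : ℕ → ℝ,
      (∀ z : ℝ, |z| < 1 / 8 → HasSum (fun n => a n * z ^ n) (Ifun z)) →
      (∀ z : ℝ, |z| < 1 / 8 → HasSum (fun n => b n * z ^ n) (Itilde z)) →
      Tendsto (fun n => b n / a n) atTop (nhds (3 / 2)) :=
  ⟨tendsto_deriv_Itilde_div_deriv_Ifun, fun _ _ => tendsto_coeff_Itilde_div_coeff_Ifun⟩
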